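/- The metric dimension of the incidence graph of the Fano plane (projective plane of order 2) is exactly 5. -/

import Mathlib

open Configuration

variable (P L : Type*) [Membership P L]

/-- The incidence graph of an incidence structure: vertices are points and lines,
with a point adjacent to a line iff it lies on it. -/
def incGraph : SimpleGraph (P ⊕ L) where
  Adj x y := match x, y with
    | .inl p, .inr l => p ∈ l
    | .inr l, .inl p => p ∈ l
    | _, _ => False
  symm := ⟨by rintro (p | l) (p' | l') h <;> simp_all⟩
  loopless := ⟨by rintro (p | l) h <;> simp_all⟩

/-- A set of vertices is resolving if the ordered distance lists to its elements
distinguish all vertices. -/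
def IsResolvingSet (S : Set (P ⊕ L)) : Prop :=
  ∀ x y : P ⊕ L, (∀ s ∈ S, (incGraph P L).dist x s = (incGraph P L).dist y s) → x = y

/-- A vertex `x` is resolved by `S` if no other vertex has the same distance list. -/
def ResolvedBy (S : Set (P ⊕ L)) (x : P ⊕ L) : Prop :=
  ∀ y : P ⊕ L, (∀ s ∈ S, (incGraph P L).dist x s = (incGraph P L).dist y s) → y = x

/-- The metric dimension: the least size of a resolving set. -/
noncomputable def metricDim : ℕ :=
  sInf {n | ∃ S : Finset (P ⊕ L), S.card = n ∧ IsResolvingSet P L ↑S}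

/-!
Distances in the incidence graph of a projective plane are determined by incidence: two distinct
points, or two distinct lines, are at distance 2, and a point is at distance 1 or 3 from a line
according as it lies on it or not. So a set of points `A` and lines `B` is resolving only if the
lines of `B` separate the points outside `A` by incidence and the points of `A` separate the lines
outside `B`; for nonempty `A` the converse holds too, as the parity of the distance to a point of
`A` tells points from lines. Counting incidence patterns gives `7 - |A| ≤ 2 ^ |B|` and
`7 - |B| ≤ 2 ^ |A|` in the Fano plane, whence `|A| + |B| ≥ 5`. Conversely, three non-collinear
points `p₁, p₂, p₃` together with, for `i = 1, 2`, the line through `pᵢ` missing the other two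
points form a resolving set.
-/

open Finset Sum SimpleGraph
open Configuration.Nondegenerate (eq_or_eq)
open Configuration.HasPoints (mkPoint mkPoint_ax)
open Configuration.HasLines (mkLine mkLine_ax)

theorem ite_eq_ite_iff_of_ne {α : Type*} {c d : Prop} [Decidable c] [Decidable d] {x y : α}
    (hxy : x ≠ y) : ((if c then x else y) = if d then x else y) ↔ (c ↔ d) := by
  by_cases c <;> by_cases d <;> simp_all [eq_comm]

section Separates

variable {α β : Type*}

def Separates (r : α → β → Prop) (A : Finset α) (B : Finset β) : Prop :=
  ∀ a₁ a₂, a₁ ∉ A → a₂ ∉ A → (∀ b ∈ B, r a₁ b ↔ r a₂ b) → a₁ = a₂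

theorem Separates.card_sub_le [Fintype α] {r : α → β → Prop} {A : Finset α} {B : Finset β}
    (h : Separates r A B) : Fintype.card α - #A ≤ 2 ^ #B := by
  classical
  calc Fintype.card α - #A = #(univ \ A) := (card_univ_sdiff A).symm
    _ ≤ #B.powerset := by
      refine card_le_card_of_injOn (fun a => {b ∈ B | r a b})
        (fun a _ => mem_powerset.mpr (filter_subset _ _)) fun a₁ ha₁ a₂ ha₂ e => ?_
      exact h a₁ a₂ (by simpa using ha₁) (by simpa using ha₂)
        (fun b hb => by simpa [hb] using congrArg (b ∈ ·) e)
    _ = 2 ^ #B := card_powerset B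

end Separates

section Incidence

variable {P L}

@[simp] theorem incGraph_adj_inl_inr {p : P} {l : L} : (incGraph P L).Adj (inl p) (inr l) ↔ p ∈ l :=
  Iff.rfl

@[simp] theorem incGraph_adj_inr_inl {p : P} {l : L} : (incGraph P L).Adj (inr l) (inl p) ↔ p ∈ l :=
  Iff.rfl

end Incidence

namespace Configuration.ProjectivePlane

variable {P L} [ProjectivePlane P L]

theorem exists_mem (l : L) : ∃ p : P, p ∈ l := by
  obtain ⟨-, -, p₃, -, l₂, -, -, -, -, -, -, -, h₃₂, -⟩ := @exists_config P L _ _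
  by_cases h : l = l₂
  · exact ⟨p₃, h ▸ h₃₂⟩
  · exact ⟨mkPoint h, (mkPoint_ax h).1⟩

open scoped Classical

theorem incGraph_dist_inl_inl (p q : P) :
    (incGraph P L).dist (inl p) (inl q) = if p = q then 0 else 2 := by
  split_ifs with h
  · simp [h]
  · have : (incGraph P L).edist (inl p) (inl q) = 2 :=
      edist_eq_two_iff.mpr ⟨by simpa, fun h => h, inr (mkLine h), mkLine_ax h⟩
    simp [SimpleGraph.dist, this]

theorem incGraph_dist_inr_inr (l m : L) :
    (incGraph P L).dist (inr l) (inr m) = if l = m then 0 else 2 := by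
  split_ifs with h
  · simp [h]
  · have : (incGraph P L).edist (inr l) (inr m) = 2 :=
      edist_eq_two_iff.mpr ⟨by simpa, fun h => h, inl (mkPoint h), mkPoint_ax h⟩
    simp [SimpleGraph.dist, this]

theorem incGraph_dist_inl_inr (p : P) (l : L) :
    (incGraph P L).dist (inl p) (inr l) = if p ∈ l then 1 else 3 := by
  split_ifs with h
  · exact dist_eq_one_iff_adj.mpr h
  · obtain ⟨q, hq⟩ := exists_mem (P := P) l
    have hpq : p ≠ q := fun e => h (e ▸ hq)
    have hle : (incGraph P L).edist (inl p) (inr l) ≤ 3 := by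
      simpa using edist_le (.cons (incGraph_adj_inl_inr.mpr (mkLine_ax hpq).1)
        (.cons (incGraph_adj_inr_inl.mpr (mkLine_ax hpq).2)
          (.cons (incGraph_adj_inl_inr.mpr hq) .nil)))
    -- a common neighbour of a point and a line would be both a line and a point
    have hlt : 2 < (incGraph P L).edist (inl p) (inr l) :=
      two_lt_edist_iff.mpr ⟨by simp, h, Set.eq_empty_of_forall_notMem <| by
        rintro (r | m) ⟨h₁, h₂⟩ <;> assumption⟩
    have : (incGraph P L).edist (inl p) (inr l) = 3 := le_antisymm hle (Order.add_one_le_of_lt hlt)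
    simp [SimpleGraph.dist, this]

theorem incGraph_dist_inr_inl (l : L) (p : P) :
    (incGraph P L).dist (inr l) (inl p) = if p ∈ l then 1 else 3 := by
  rw [dist_comm, incGraph_dist_inl_inr]

theorem _root_.IsResolvingSet.separates {A : Finset P} {B : Finset L}
    (h : IsResolvingSet P L ↑(A.disjSum B)) :
    Separates (· ∈ ·) A B ∧ Separates (fun l p => p ∈ l) B A := by
  constructor
  · intro p q hp hq hpq
    refine inl_injective (h _ _ ?_)
    rintro (r | l) hs <;> simp only [mem_coe, inl_mem_disjSum, inr_mem_disjSum] at hs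
    · rw [incGraph_dist_inl_inl, incGraph_dist_inl_inl, if_neg (ne_of_mem_of_not_mem hs hp).symm,
        if_neg (ne_of_mem_of_not_mem hs hq).symm]
    · rw [incGraph_dist_inl_inr, incGraph_dist_inl_inr]
      exact (ite_eq_ite_iff_of_ne (by decide)).mpr (hpq l hs)
  · intro l m hl hm hlm
    refine inr_injective (h _ _ ?_)
    rintro (p | n) hs <;> simp only [mem_coe, inl_mem_disjSum, inr_mem_disjSum] at hs
    · rw [incGraph_dist_inr_inl, incGraph_dist_inr_inl]
      exact (ite_eq_ite_iff_of_ne (by decide)).mpr (hlm p hs)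
    · rw [incGraph_dist_inr_inr, incGraph_dist_inr_inr, if_neg (ne_of_mem_of_not_mem hs hl).symm,
        if_neg (ne_of_mem_of_not_mem hs hm).symm]

theorem isResolvingSet_disjSum {A : Finset P} {B : Finset L} (hA : A.Nonempty)
    (hP : Separates (· ∈ ·) A B) (hL : Separates (fun l p => p ∈ l) B A) :
    IsResolvingSet P L ↑(A.disjSum B) := by
  obtain ⟨a, ha⟩ := hA
  intro x y h
  -- distances to the point `a` are even from points and odd from lines
  have parity (p : P) (l : L) :
      (incGraph P L).dist (inl p) (inl a) ≠ (incGraph P L).dist (inr l) (inl a) := by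
    rw [incGraph_dist_inl_inl, incGraph_dist_inr_inl]
    split_ifs <;> omega
  rcases x with p | l <;> rcases y with q | m
  · congr 1
    by_cases hp : p ∈ A
    · simpa [incGraph_dist_inl_inl, eq_comm] using h (inl p) (by simpa)
    by_cases hq : q ∈ A
    · simpa [incGraph_dist_inl_inl] using h (inl q) (by simpa)
    refine hP p q hp hq fun l hl => ?_
    have := h (inr l) (by simpa)
    rwa [incGraph_dist_inl_inr, incGraph_dist_inl_inr, ite_eq_ite_iff_of_ne (by decide)] at this
  · exact absurd (h (inl a) (by simpa)) (parity p m)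
  · exact absurd (h (inl a) (by simpa)).symm (parity q l)
  · congr 1
    by_cases hl : l ∈ B
    · simpa [incGraph_dist_inr_inr, eq_comm] using h (inr l) (by simpa)
    by_cases hm : m ∈ B
    · simpa [incGraph_dist_inr_inr] using h (inr m) (by simpa)
    refine hL l m hl hm fun p hp => ?_
    have := h (inl p) (by simpa)
    rwa [incGraph_dist_inr_inl, incGraph_dist_inr_inl, ite_eq_ite_iff_of_ne (by decide)] at this

theorem card_filter_mem [Fintype P] [Finite L] (l : L) : #{p : P | p ∈ l} = order P L + 1 := by
  rw [← pointCount_eq P l, pointCount, Nat.card_eq_fintype_card, Fintype.card_subtype]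

theorem mem_of_card_eq_order_add_one [Fintype P] [Finite L] {s : Finset P} {l : L}
    (hs : ∀ p ∈ s, p ∈ l) (hcard : #s = order P L + 1) {p : P} (hp : p ∈ l) : p ∈ s := by
  have hline := card_filter_mem (P := P) l
  have hsub : s ⊆ ({p | p ∈ l} : Finset P) := fun p h => mem_filter.mpr ⟨mem_univ p, hs p h⟩
  rw [eq_of_subset_of_card_le hsub (by omega)]
  exact mem_filter.mpr ⟨mem_univ p, hp⟩

theorem card_filter_notMem_notMem_le [Fintype P] [Finite L] {l m : L} (hlm : l ≠ m) :
    #{p : P | p ∉ l ∧ p ∉ m} ≤ order P L ^ 2 - order P L := by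
  set Fl : Finset P := {p | p ∈ l}
  set Fm : Finset P := {p | p ∈ m}
  have hinter : #(Fl ∩ Fm) ≤ 1 := by
    refine card_le_one.mpr fun p hp q hq => ?_
    simp only [Fl, Fm, mem_inter, mem_filter, mem_univ, true_and] at hp hq
    exact (eq_or_eq hp.1 hq.1 hp.2 hq.2).resolve_right hlm
  have hunion := card_union_add_card_inter Fl Fm
  have hcompl : ({p | p ∉ l ∧ p ∉ m} : Finset P) = univ \ (Fl ∪ Fm) := by
    ext p
    simp [Fl, Fm]
  rw [hcompl, card_univ_sdiff, card_points P L]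
  rw [card_filter_mem, card_filter_mem] at hunion
  generalize order P L ^ 2 = k
  omega

theorem exists_mem_notMem_notMem [Finite P] [Fintype L] {p q r : P} (hqp : q ≠ p) (hrp : r ≠ p) :
    ∃ l : L, p ∈ l ∧ q ∉ l ∧ r ∉ l := by
  have hcard : #({mkLine hqp, mkLine hrp} : Finset L) < #({l | p ∈ l} : Finset L) := by
    rw [← Fintype.card_subtype, ← Nat.card_eq_fintype_card]
    exact card_le_two.trans_lt (two_lt_lineCount L p)
  obtain ⟨l, hpl, hl⟩ := exists_mem_notMem_of_card_lt_card hcard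
  simp only [mem_filter, mem_univ, true_and, mem_insert, mem_singleton, not_or] at hpl hl
  refine ⟨l, hpl, fun hq => hl.1 ?_, fun hr => hl.2 ?_⟩
  · exact (eq_or_eq hq hpl (mkLine_ax hqp).1 (mkLine_ax hqp).2).resolve_left hqp
  · exact (eq_or_eq hr hpl (mkLine_ax hrp).1 (mkLine_ax hrp).2).resolve_left hrp

theorem eq_or_eq_or_eq_of_mem [Fintype P] [Finite L] (hq : order P L = 2) {l : L} {a b c d : P}
    (ha : a ∈ l) (hb : b ∈ l) (hc : c ∈ l) (hd : d ∈ l) (hab : a ≠ b) (hac : a ≠ c) (hbc : b ≠ c) :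
    d = a ∨ d = b ∨ d = c := by
  simpa using mem_of_card_eq_order_add_one (s := {a, b, c}) (by simp [ha, hb, hc])
    (by rw [card_eq_three.mpr ⟨a, b, c, hab, hac, hbc, rfl⟩, hq]) hd

theorem line_eq_or_eq_or_eq_of_mem [Finite P] [Fintype L] (hq : order P L = 2) {p : P}
    {l m n k : L} (hl : p ∈ l) (hm : p ∈ m) (hn : p ∈ n) (hk : p ∈ k) (hlm : l ≠ m) (hln : l ≠ n)
    (hmn : m ≠ n) : k = l ∨ k = m ∨ k = n :=
  eq_or_eq_or_eq_of_mem (P := Dual L) (L := Dual P) ((Dual.order P L).trans hq)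
    hl hm hn hk hlm hln hmn

theorem eq_or_eq_or_eq_of_notMem [Fintype P] [Finite L] (hq : order P L = 2) {l m : L}
    (hlm : l ≠ m) {a b c : P} (hal : a ∉ l) (ham : a ∉ m) (hbl : b ∉ l) (hbm : b ∉ m) (hcl : c ∉ l)
    (hcm : c ∉ m) : a = b ∨ a = c ∨ b = c := by
  by_contra! h
  have hle := card_filter_notMem_notMem_le (P := P) hlm
  have hlt : 2 < #{p : P | p ∉ l ∧ p ∉ m} :=
    two_lt_card_iff.mpr ⟨a, b, c, by simp [*], by simp [*], by simp [*], h⟩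
  rw [hq] at hle
  omega

theorem ne_and_ne_of_not_collinear {p₁ p₂ p₃ : P} (h₁₂ : p₁ ≠ p₂)
    (htri : ∀ l : L, p₁ ∈ l → p₂ ∈ l → p₃ ∉ l) : p₁ ≠ p₃ ∧ p₂ ≠ p₃ := by
  have h₃ := htri _ (mkLine_ax h₁₂).1 (mkLine_ax h₁₂).2
  exact ⟨fun e => h₃ (e ▸ (mkLine_ax h₁₂).1), fun e => h₃ (e ▸ (mkLine_ax h₁₂).2)⟩

theorem eq_of_mem_notMem_notMem [Finite P] [Fintype L] (hq : order P L = 2) {p q r : P} {l m : L}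
    (hqp : q ≠ p) (htri : ∀ n : L, p ∈ n → q ∈ n → r ∉ n) (hpl : p ∈ l) (hql : q ∉ l) (hrl : r ∉ l)
    (hpm : p ∈ m) (hqm : q ∉ m) (hrm : r ∉ m) : m = l := by
  have hrp := (ne_and_ne_of_not_collinear hqp.symm htri).1.symm
  obtain ⟨hqa, hpa⟩ := mkLine_ax (L := L) hqp
  obtain ⟨hrb, hpb⟩ := mkLine_ax (L := L) hrp
  have hab : mkLine hqp ≠ mkLine hrp := fun e => htri _ hpa hqa (e ▸ hrb)
  rcases line_eq_or_eq_or_eq_of_mem hq hpa hpb hpl hpm hab (fun e => hql (e ▸ hqa))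
    (fun e => hrl (e ▸ hrb)) with h | h | h
  exacts [absurd (h ▸ hqa) hqm, absurd (h ▸ hrb) hrm, h]

theorem separates_points [Fintype P] [Finite L] (hq : order P L = 2) {p₁ p₂ p₃ : P} {l₁ l₂ : L}
    (h₁ : p₁ ∈ l₁) (h₂₁ : p₂ ∉ l₁) (h₃₁ : p₃ ∉ l₁) (h₂ : p₂ ∈ l₂) (h₁₂ : p₁ ∉ l₂) (h₃₂ : p₃ ∉ l₂) :
    Separates (· ∈ ·) {p₁, p₂, p₃} {l₁, l₂} := by
  have hl : l₁ ≠ l₂ := fun e => h₁₂ (e ▸ h₁)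
  obtain ⟨hx₁, hx₂⟩ := mkPoint_ax (P := P) hl
  intro p q hpA hqA hpq
  simp only [mem_insert, mem_singleton, not_or] at hpA hqA
  have e₁ : p ∈ l₁ ↔ q ∈ l₁ := hpq l₁ (by simp)
  have e₂ : p ∈ l₂ ↔ q ∈ l₂ := hpq l₂ (by simp)
  by_cases g₁ : p ∈ l₁ <;> by_cases g₂ : p ∈ l₂
  · exact (eq_or_eq g₁ (e₁.mp g₁) g₂ (e₂.mp g₂)).resolve_right hl
  · rcases eq_or_eq_or_eq_of_mem hq hx₁ h₁ g₁ (e₁.mp g₁) (fun e => h₁₂ (e ▸ hx₂))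
      (fun e => g₂ (e ▸ hx₂)) (Ne.symm hpA.1) with h | h | h
    exacts [absurd (h ▸ hx₂) (mt e₂.mpr g₂), absurd h hqA.1, h.symm]
  · rcases eq_or_eq_or_eq_of_mem hq hx₂ h₂ g₂ (e₂.mp g₂) (fun e => h₂₁ (e ▸ hx₁))
      (fun e => g₁ (e ▸ hx₁)) (Ne.symm hpA.2.1) with h | h | h
    exacts [absurd (h ▸ hx₁) (mt e₁.mpr g₁), absurd h hqA.2.1, h.symm]
  · rcases eq_or_eq_or_eq_of_notMem hq hl g₁ g₂ (mt e₁.mpr g₁) (mt e₂.mpr g₂) h₃₁ h₃₂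
      with h | h | h
    exacts [h, absurd h hpA.2.2, absurd h hqA.2.2]

theorem separates_lines [Fintype P] [Fintype L] (hq : order P L = 2) {p₁ p₂ p₃ : P} {l₁ l₂ : L}
    (hp₁₂ : p₁ ≠ p₂) (htri : ∀ l : L, p₁ ∈ l → p₂ ∈ l → p₃ ∉ l) (h₁ : p₁ ∈ l₁) (h₂₁ : p₂ ∉ l₁)
    (h₃₁ : p₃ ∉ l₁) (h₂ : p₂ ∈ l₂) (h₁₂ : p₁ ∉ l₂) (h₃₂ : p₃ ∉ l₂) :
    Separates (fun l p => p ∈ l) {l₁, l₂} {p₁, p₂, p₃} := by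
  obtain ⟨hp₁₃, hp₂₃⟩ := ne_and_ne_of_not_collinear hp₁₂ htri
  intro l m hlB hmB hlm
  simp only [mem_insert, mem_singleton, not_or] at hlB
  have e₁ : p₁ ∈ l ↔ p₁ ∈ m := hlm p₁ (by simp)
  have e₂ : p₂ ∈ l ↔ p₂ ∈ m := hlm p₂ (by simp)
  have e₃ : p₃ ∈ l ↔ p₃ ∈ m := hlm p₃ (by simp)
  by_cases g₁ : p₁ ∈ l
  · by_cases g₂ : p₂ ∈ l
    · exact (eq_or_eq g₁ g₂ (e₁.mp g₁) (e₂.mp g₂)).resolve_left hp₁₂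
    by_cases g₃ : p₃ ∈ l
    · exact (eq_or_eq g₁ g₃ (e₁.mp g₁) (e₃.mp g₃)).resolve_left hp₁₃
    exact absurd (eq_of_mem_notMem_notMem hq hp₁₂.symm htri h₁ h₂₁ h₃₁ g₁ g₂ g₃) hlB.1
  by_cases g₂ : p₂ ∈ l
  · by_cases g₃ : p₃ ∈ l
    · exact (eq_or_eq g₂ g₃ (e₂.mp g₂) (e₃.mp g₃)).resolve_left hp₂₃
    exact absurd (eq_of_mem_notMem_notMem hq hp₁₂ (fun n h₂ h₁ => htri n h₁ h₂) h₂ h₁₂ h₃₂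
      g₂ g₁ g₃) hlB.2
  by_cases g₃ : p₃ ∈ l
  · exact (eq_of_mem_notMem_notMem hq hp₁₃ (fun n h₃ h₁ h₂ => htri n h₁ h₂ h₃) g₃ g₁ g₂
      (e₃.mp g₃) (mt e₁.mpr g₁) (mt e₂.mpr g₂)).symm
  by_contra hne
  rcases eq_or_eq_or_eq_of_notMem hq hne g₁ (mt e₁.mpr g₁) g₂ (mt e₂.mpr g₂) g₃ (mt e₃.mpr g₃)
    with h | h | h
  exacts [hp₁₂ h, hp₁₃ h, hp₂₃ h]

theorem exists_triangle : ∃ p₁ p₂ p₃ : P, p₁ ≠ p₂ ∧ ∀ l : L, p₁ ∈ l → p₂ ∈ l → p₃ ∉ l := by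
  obtain ⟨q₁, q₂, q₃, -, m₂, m₃, h₁₂, -, -, h₂₂, h₂₃, -, h₃₂, h₃₃⟩ := @exists_config P L _ _
  refine ⟨q₂, q₃, q₁, fun e => h₃₃ (e ▸ h₂₃), fun l h₂ h₃ => ?_⟩
  rwa [← (eq_or_eq h₂₂ h₃₂ h₂ h₃).resolve_left fun e => h₃₃ (e ▸ h₂₃)]

theorem exists_isResolvingSet_card_eq_five [Fintype P] [Fintype L] (hq : order P L = 2) :
    ∃ S : Finset (P ⊕ L), #S = 5 ∧ IsResolvingSet P L ↑S := by
  obtain ⟨p₁, p₂, p₃, hp₁₂, htri⟩ := exists_triangle (P := P) (L := L)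
  obtain ⟨hp₁₃, hp₂₃⟩ := ne_and_ne_of_not_collinear hp₁₂ htri
  obtain ⟨l₁, h₁, h₂₁, h₃₁⟩ := exists_mem_notMem_notMem (L := L) hp₁₂.symm hp₁₃.symm
  obtain ⟨l₂, h₂, h₁₂, h₃₂⟩ := exists_mem_notMem_notMem (L := L) hp₁₂ hp₂₃.symm
  refine ⟨({p₁, p₂, p₃} : Finset P).disjSum {l₁, l₂}, ?_,
    isResolvingSet_disjSum (insert_nonempty _ _) (separates_points hq h₁ h₂₁ h₃₁ h₂ h₁₂ h₃₂)
      (separates_lines hq hp₁₂ htri h₁ h₂₁ h₃₁ h₂ h₁₂ h₃₂)⟩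
  rw [card_disjSum, card_eq_three.mpr ⟨_, _, _, hp₁₂, hp₁₃, hp₂₃, rfl⟩,
    card_pair (ne_of_mem_of_not_mem' h₁ h₁₂)]

theorem five_le_card_of_isResolvingSet [Fintype P] [Fintype L] (hq : order P L = 2)
    {S : Finset (P ⊕ L)} (hS : IsResolvingSet P L ↑S) : 5 ≤ #S := by
  rw [← toLeft_disjSum_toRight (u := S)] at hS ⊢
  obtain ⟨hP, hL⟩ := hS.separates
  have h₁ := hP.card_sub_le
  have h₂ := hL.card_sub_le
  rw [card_points P L, hq] at h₁
  rw [card_lines P L, hq] at h₂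
  rw [card_disjSum]
  generalize #S.toLeft = a at *
  generalize #S.toRight = b at *
  by_contra! h
  have ha : a ≤ 4 := by omega
  have hb : b ≤ 4 := by omega
  interval_cases a <;> interval_cases b <;> omega

end Configuration.ProjectivePlane

/-- the metric dimension of the Fano plane (projective plane of order 2)
is exactly 5. -/
theorem metricDim_fano
    {P L : Type*} [Membership P L] [ProjectivePlane P L] [Fintype P] [Fintype L]
    (hq : ProjectivePlane.order P L = 2) :
    metricDim P L = 5 := by
  obtain ⟨S, hcard, hS⟩ := ProjectivePlane.exists_isResolvingSet_card_eq_five hq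
  refine le_antisymm (Nat.sInf_le ⟨S, hcard, hS⟩) (le_csInf ⟨5, S, hcard, hS⟩ ?_)
  rintro n ⟨T, rfl, hT⟩
  exact ProjectivePlane.five_le_card_of_isResolvingSet hq hT
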